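/- Let A, B, C ∈ ℝ² be pairwise distinct and ωA, ωB, ωC ∈ ℝ. Then the derivative at t = 0 of t ↦ I₂(ωB, ωC, C − (B + t·K₂(A, ωA, B))) equals (ωA·ωB·ωC/(8π²)) · cross2(B − A, B − C) / (‖B − A‖² · ‖B − C‖²). That is, advecting B by the velocity induced by the vortex at A changes the 2d interaction energy between B and C at this explicit rate. -/

import Mathlib

open MeasureTheory Real

noncomputable section

/-- The scalar cross product on `EuclideanSpace ℝ (Fin 2)`: `cross2 u v = u₁v₂ − u₂v₁`. -/
def cross2 (u v : EuclideanSpace ℝ (Fin 2)) : ℝ := u 0 * v 1 - u 1 * v 0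

/-- The rotation by 90 degrees: `v^⊥ = (−v₂, v₁)`. -/
def perp (v : EuclideanSpace ℝ (Fin 2)) : EuclideanSpace ℝ (Fin 2) :=
  (WithLp.equiv 2 (Fin 2 → ℝ)).symm ![-(v 1), v 0]

/-- The 2d Biot-Savart velocity induced at `x` by a point vortex at `p` with scalar
vorticity `w`: `K₂(p, w, x) = (w/(2π))·(x − p)^⊥/‖x − p‖²`. -/
def K2 (p : EuclideanSpace ℝ (Fin 2)) (w : ℝ) (x : EuclideanSpace ℝ (Fin 2)) :
    EuclideanSpace ℝ (Fin 2) :=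
  (w / (2 * π)) • ((‖x - p‖ ^ 2)⁻¹ • perp (x - p))

/-- The 2d interaction energy of scalar vorticities `wb, wc` at displacement `d`:
`I₂(wb, wc, d) = (1/(4π))·wb·wc·log ‖d‖`. -/
def I2 (wb wc : ℝ) (d : EuclideanSpace ℝ (Fin 2)) : ℝ :=
  (1 / (4 * π)) * wb * wc * Real.log ‖d‖

/-! Along the advection `B(t) = B + t V` the energy is `(ωB ωC / 4π) log ‖C − B(t)‖`, whose
derivative is `−(ωB ωC / 4π) ⟪C − B, V⟫ / ‖C − B‖²`. The Biot-Savart velocity `V` is a multiple of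
`(B − A)^⊥`, and `⟪C − B, (B − A)^⊥⟫ = cross2 (B − A) (C − B)`. -/

open scoped RealInnerProductSpace

theorem HasDerivAt.log_norm {F : Type*} [NormedAddCommGroup F] [InnerProductSpace ℝ F]
    {f : ℝ → F} {f' : F} {x : ℝ} (hf : HasDerivAt f f' x) (h0 : f x ≠ 0) :
    HasDerivAt (fun t => Real.log ‖f t‖) (⟪f x, f'⟫ / ‖f x‖ ^ 2) x := by
  have hsq : (fun t => Real.log ‖f t‖) = fun t => Real.log (‖f t‖ ^ 2) / 2 := by
    funext t
    rw [Real.log_pow]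
    ring
  rw [hsq]
  exact ((hf.norm_sq.log (by simpa using h0)).div_const 2).congr_deriv (by ring)

theorem hasDerivAt_I2 {wb wc : ℝ} {f : ℝ → EuclideanSpace ℝ (Fin 2)}
    {f' : EuclideanSpace ℝ (Fin 2)} {x : ℝ} (hf : HasDerivAt f f' x) (h0 : f x ≠ 0) :
    HasDerivAt (fun t => I2 wb wc (f t))
      (1 / (4 * π) * wb * wc * (⟪f x, f'⟫ / ‖f x‖ ^ 2)) x :=
  (hf.log_norm h0).const_mul _

theorem inner_perp (u v : EuclideanSpace ℝ (Fin 2)) : ⟪u, perp v⟫ = cross2 v u := by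
  simp only [perp, cross2, WithLp.equiv_symm_apply, PiLp.inner_apply, RCLike.inner_apply,
    ringHom_apply, Fin.sum_univ_two, Matrix.cons_val_zero, Matrix.cons_val_one,
    Matrix.cons_val_fin_one]
  ring

theorem inner_K2 (u p x : EuclideanSpace ℝ (Fin 2)) (w : ℝ) :
    ⟪u, K2 p w x⟫ = w / (2 * π) * cross2 (x - p) u / ‖x - p‖ ^ 2 := by
  rw [K2, real_inner_smul_right, real_inner_smul_right, inner_perp]
  ring

theorem deriv_interaction_energy_advected_general (A B C : EuclideanSpace ℝ (Fin 2))
    (ωA ωB ωC : ℝ) (hBC : B ≠ C) :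
    deriv (fun t : ℝ => I2 ωB ωC (C - (B + t • K2 A ωA B))) 0 =
      (ωA * ωB * ωC / (8 * π ^ 2)) * cross2 (B - A) (B - C) /
        (‖B - A‖ ^ 2 * ‖B - C‖ ^ 2) := by
  have hline : HasDerivAt (fun t : ℝ => C - (B + t • K2 A ωA B)) (-K2 A ωA B) 0 := by
    simpa using (((hasDerivAt_id (0 : ℝ)).smul_const (K2 A ωA B)).const_add B).const_sub C
  have hCB : C - (B + (0 : ℝ) • K2 A ωA B) = -(B - C) := by simp
  have hne : C - (B + (0 : ℝ) • K2 A ωA B) ≠ 0 := hCB ▸ neg_ne_zero.mpr (sub_ne_zero.mpr hBC)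
  rw [(hasDerivAt_I2 hline hne).deriv, hCB, norm_neg, inner_neg_left, inner_neg_right, neg_neg,
    inner_K2]
  ring

/-- The rate of change of the 2d interaction energy between `B` and `C` as `B` is
advected by the velocity induced by the point vortex at `A`. -/
theorem deriv_interaction_energy_advected (A B C : EuclideanSpace ℝ (Fin 2))
    (ωA ωB ωC : ℝ) (hAB : A ≠ B) (hBC : B ≠ C) (hAC : A ≠ C) :
    deriv (fun t : ℝ => I2 ωB ωC (C - (B + t • K2 A ωA B))) 0 =
      (ωA * ωB * ωC / (8 * π ^ 2)) * cross2 (B - A) (B - C) /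
        (‖B - A‖ ^ 2 * ‖B - C‖ ^ 2) :=
  deriv_interaction_energy_advected_general A B C ωA ωB ωC hBC
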